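/- Let H be a finite connected simple graph that has weak BEL gadgets. Then H has BEL gadgets: for every finite graph G and every 2-coloring ψ of the edges of G without a monochromatic copy of H, there exists a finite graph F such that F is not Ramsey for H, F contains G as an induced subgraph, and every 2-coloring of the edges of F without a monochromatic copy of H, restricted to the copy of G, agrees with ψ up to a permutation of the two colors. -/

import Mathlib

open SimpleGraph

/-- The subgraph of `F` consisting of the edges that receive color `b` under the
edge 2-coloring `c` (colors are `Bool`: `true` = red, `false` = blue). -/
def colorSubgraph {V : Type*} (F : SimpleGraph V) (c : Sym2 V → Bool) (b : Bool) :
    SimpleGraph V where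
  Adj x y := F.Adj x y ∧ c s(x, y) = b
  symm := by
    constructor
    intro x y h
    exact ⟨h.1.symm, by rw [Sym2.eq_swap]; exact h.2⟩
  loopless := by
    constructor
    intro x h
    exact h.1.ne rfl

/-- `G` contains a copy of `H`, i.e. a subgraph isomorphic to `H`. -/
def ContainsCopy {V W : Type*} (G : SimpleGraph V) (H : SimpleGraph W) : Prop :=
  ∃ f : W → V, Function.Injective f ∧ ∀ ⦃a b⦄, H.Adj a b → G.Adj (f a) (f b)

/-- The 2-coloring `c` of (the edges of) `F` contains a monochromatic copy of `H`. -/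
def HasMonoCopy {V W : Type*} (F : SimpleGraph V) (H : SimpleGraph W)
    (c : Sym2 V → Bool) : Prop :=
  ∃ b : Bool, ContainsCopy (colorSubgraph F c b) H

/-- `F → H`: every 2-coloring of the edges of `F` contains a monochromatic copy of `H`. -/
def IsRamseyFor {V W : Type*} (F : SimpleGraph V) (H : SimpleGraph W) : Prop :=
  ∀ c : Sym2 V → Bool, HasMonoCopy F H c

/-- `F` is Ramsey `H`-minimal: `F → H` but no proper subgraph of `F` is Ramsey for `H`. -/
def IsRamseyMinimalFor {V W : Type*} (F : SimpleGraph V) (H : SimpleGraph W) : Prop :=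
  IsRamseyFor F H ∧ ∀ F' : F.Subgraph, F' ≠ ⊤ → ¬ IsRamseyFor F'.coe H

/-- The degree of the vertex `v` in `G`. -/
noncomputable def degOf {V : Type*} (G : SimpleGraph V) (v : V) : ℕ :=
  (G.neighborSet v).ncard

/-- The minimum degree `δ(G)`. -/
noncomputable def minDeg {V : Type*} (G : SimpleGraph V) : ℕ :=
  sInf {k | ∃ v, degOf G v = k}

/-- `s(H)`: the minimum of `δ(F)` over all Ramsey `H`-minimal graphs `F`. -/
noncomputable def sVal {W : Type*} (H : SimpleGraph W) : ℕ :=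
  sInf {k | ∃ (n : ℕ) (F : SimpleGraph (Fin n)), IsRamseyMinimalFor F H ∧ minDeg F = k}

/-- `H` has BEL gadgets: for every finite graph `G` and every 2-coloring `ψ` of the
edges of `G` without a monochromatic copy of `H`, there is a finite graph `F` that is
not Ramsey for `H`, contains `G` as an induced subgraph, and in every 2-coloring of `F`
without a monochromatic copy of `H` the copy of `G` is colored according to `ψ`,
up to a permutation of the two colors. -/
def HasBELGadgets {W : Type*} (H : SimpleGraph W) : Prop :=
  ∀ (m : ℕ) (G : SimpleGraph (Fin m)) (ψ : Sym2 (Fin m) → Bool),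
    ¬ HasMonoCopy G H ψ →
    ∃ (n : ℕ) (F : SimpleGraph (Fin n)) (g : Fin m → Fin n),
      ¬ IsRamseyFor F H ∧
      Function.Injective g ∧
      (∀ a b, G.Adj a b ↔ F.Adj (g a) (g b)) ∧
      ∀ c : Sym2 (Fin n) → Bool, ¬ HasMonoCopy F H c →
        (∀ a b, G.Adj a b → c s(g a, g b) = ψ s(a, b)) ∨
        (∀ a b, G.Adj a b → c s(g a, g b) = !ψ s(a, b))

/-- `H` has weak BEL gadgets: for every pair of edge-disjoint finite graphs `G₀`, `G₁`
on the same vertex set, both `H`-free, there is a finite graph `G` containing an induced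
copy of `G₀ ∪ G₁` (via the injection `g`) such that there is a 2-coloring of `G` without
a monochromatic copy of `H` in which the copy of `G₀` is red (`true`) and the copy of
`G₁` is blue (`false`), and in every 2-coloring of `G` without a monochromatic copy of
`H` the copy of `G₀` is monochromatic and the copy of `G₁` is monochromatic. -/
def HasWeakBELGadgets {W : Type*} (H : SimpleGraph W) : Prop :=
  ∀ (m : ℕ) (G₀ G₁ : SimpleGraph (Fin m)),
    (∀ x y, ¬ (G₀.Adj x y ∧ G₁.Adj x y)) →
    ¬ ContainsCopy G₀ H → ¬ ContainsCopy G₁ H →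
    ∃ (n : ℕ) (G : SimpleGraph (Fin n)) (g : Fin m → Fin n),
      Function.Injective g ∧
      (∀ a b, (G₀ ⊔ G₁).Adj a b ↔ G.Adj (g a) (g b)) ∧
      (∃ c : Sym2 (Fin n) → Bool,
        ¬ HasMonoCopy G H c ∧
        (∀ a b, G₀.Adj a b → c s(g a, g b) = true) ∧
        (∀ a b, G₁.Adj a b → c s(g a, g b) = false)) ∧
      (∀ c : Sym2 (Fin n) → Bool, ¬ HasMonoCopy G H c →
        (∃ b : Bool, ∀ a a', G₀.Adj a a' → c s(g a, g a') = b) ∧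
        (∃ b : Bool, ∀ a a', G₁.Adj a a' → c s(g a, g a') = b))

/-! Give the red edges of `G` and a copy of `H` minus one edge `uv` to the first class, and the
blue edges of `G` together with `uv` to the second. As `H` is connected, a copy of `H` in either
class lies inside `G` or inside the `H`-part, and neither is possible: `ψ` is `H`-free, while
`H \ uv` and a single edge have too few edges once `H` has at least three vertices (smaller
connected `H` embed in any edge, which forces `G` to be edgeless). In every `H`-free colouring of
a weak gadget for this pair both classes are monochromatic, and in different colours, since
otherwise the copy of `H` would be monochromatic; hence `ψ` is reproduced up to swapping colours.
-/

namespace SimpleGraph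

variable {V W α β : Type*}

theorem containsCopy_iff_isContained {G : SimpleGraph V} {H : SimpleGraph W} :
    ContainsCopy G H ↔ H ⊑ G :=
  ⟨fun ⟨f, hf, hadj⟩ => ⟨⟨⟨f, fun h => hadj h⟩, hf⟩⟩,
    fun ⟨f⟩ => ⟨f, f.injective, fun _ _ h => f.toHom.map_adj h⟩⟩

theorem isContained_of_le_comap {A : SimpleGraph α} {B : SimpleGraph β} {f : α → β}
    (hf : Function.Injective f) (h : A ≤ B.comap f) : A ⊑ B :=
  isContained_iff_exists_le_comap.2 ⟨⟨f, hf⟩, h⟩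

theorem IsContained.natCard_edgeSet_le {A : SimpleGraph α} {B : SimpleGraph β}
    [Finite B.edgeSet] (h : A ⊑ B) : Nat.card A.edgeSet ≤ Nat.card B.edgeSet :=
  let ⟨f⟩ := h
  Nat.card_le_card_of_injective _ f.mapEdgeSet.injective

theorem not_isContained_of_lt [Finite V] {H H' : SimpleGraph V} (h : H' < H) : ¬ H ⊑ H' := by
  intro hc
  have hlt : H'.edgeSet.ncard < H.edgeSet.ncard :=
    Set.ncard_lt_ncard (edgeSet_ssubset_edgeSet.2 h) (Set.toFinite _)
  have hle := hc.natCard_edgeSet_le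
  rw [Nat.card_coe_set_eq, Nat.card_coe_set_eq] at hle
  omega

theorem Connected.free_edge_of_two_lt_natCard [Finite V] {H : SimpleGraph V} (hH : H.Connected)
    (hV : 2 < Nat.card V) (u v : β) : H.Free (edge u v) := by
  intro hc
  have : Finite (edge u v).edgeSet :=
    ((Set.finite_singleton _).subset edgeSet_edge_subset).to_subtype
  have hedge : (edge u v).edgeSet.ncard ≤ 1 :=
    (Set.ncard_le_ncard edgeSet_edge_subset (Set.finite_singleton _)).trans_eq
      (Set.ncard_singleton _)
  have h₁ := hc.natCard_edgeSet_le
  have h₂ := hH.card_vert_le_card_edgeSet_add_one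
  simp only [Nat.card_coe_set_eq] at h₁ h₂
  omega

theorem isContained_of_natCard_le_two [Finite V] (H : SimpleGraph V) (hV : Nat.card V ≤ 2)
    {G : SimpleGraph β} (hG : G ≠ ⊥) : H ⊑ G := by
  have := Fintype.ofFinite V
  have hK : H ⊑ completeGraph (Fin 2) := isContained_top_iff.2 <|
    Function.Embedding.nonempty_of_card_le (by simpa [Nat.card_eq_fintype_card] using hV)
  exact hK.trans ((not_cliqueFree_iff_top_isContained 2).1 (by simpa using hG))

theorem Connected.isContained_left_of_apply_eq_inl {H : SimpleGraph W} {A : SimpleGraph α}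
    {B : SimpleGraph β} (hH : H.Connected) (f : Copy H (A ⊕g B)) {x₀ : W} {a : α}
    (h₀ : f x₀ = .inl a) : H ⊑ A := by
  have hl : ∀ x, ∃ a, f x = .inl a := fun x => by
    rcases hx : f x with a' | b'
    · exact ⟨a', rfl⟩
    · exact absurd (h₀ ▸ hx ▸ (hH.preconnected x₀ x).map f.toHom) (not_reachable_sum_inl_inr _ _)
  choose g hg using hl
  refine isContained_of_le_comap (f := g) (fun x y h => f.injective ?_) fun x y h => ?_
  · exact (hg x).trans (h ▸ hg y).symm
  · simpa [hg] using f.toHom.map_adj h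

theorem Connected.isContained_sum {H : SimpleGraph W} {A : SimpleGraph α} {B : SimpleGraph β}
    (hH : H.Connected) (h : H ⊑ A ⊕g B) : H ⊑ A ∨ H ⊑ B := by
  obtain ⟨f⟩ := h
  obtain ⟨x₀⟩ := hH.nonempty
  rcases h₀ : f x₀ with a | b
  · exact .inl (hH.isContained_left_of_apply_eq_inl f h₀)
  · refine .inr (hH.isContained_left_of_apply_eq_inl (Iso.sumComm.toCopy.comp f)
      (x₀ := x₀) (a := b) ?_)
    simp [Copy.comp_apply, h₀]

theorem sum_sup_sum (A A' : SimpleGraph α) (B B' : SimpleGraph β) :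
    (A ⊕g B) ⊔ (A' ⊕g B') = (A ⊔ A') ⊕g (B ⊔ B') := by
  ext (x | x) (y | y) <;> simp

theorem Disjoint.sum {A A' : SimpleGraph α} {B B' : SimpleGraph β} (hA : Disjoint A A')
    (hB : Disjoint B B') : Disjoint (A ⊕g B) (A' ⊕g B') := by
  rw [disjoint_iff_inf_le] at *
  rintro (x | x) (y | y) ⟨h, h'⟩ <;> simp only [sum_adj] at h h'
  exacts [hA ⟨h, h'⟩, hB ⟨h, h'⟩]

theorem sum_le_comap_iff {A : SimpleGraph α} {B : SimpleGraph β} {X : SimpleGraph V}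
    {g : α ⊕ β → V} :
    A ⊕g B ≤ X.comap g ↔ A ≤ X.comap (g ∘ .inl) ∧ B ≤ X.comap (g ∘ .inr) := by
  refine ⟨fun h => ⟨fun a a' ha => h (by simpa using ha), fun b b' hb => h (by simpa using hb)⟩,
    ?_⟩
  rintro ⟨hA, hB⟩ (x | x) (y | y) h <;> simp at h
  exacts [hA h, hB h]

end SimpleGraph

section Coloring

variable {V W β : Type*}

theorem colorSubgraph_true_sup_false (F : SimpleGraph V) (c : Sym2 V → Bool) :
    colorSubgraph F c true ⊔ colorSubgraph F c false = F := by
  ext x y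
  cases h : c s(x, y) <;> simp [colorSubgraph, h]

theorem disjoint_colorSubgraph_true_false (F : SimpleGraph V) (c : Sym2 V → Bool) :
    Disjoint (colorSubgraph F c true) (colorSubgraph F c false) := by
  rw [disjoint_iff_inf_le]
  rintro x y ⟨⟨-, ht⟩, ⟨-, hf⟩⟩
  exact Bool.noConfusion (ht.symm.trans hf)

theorem hasMonoCopy_iff {F : SimpleGraph V} {H : SimpleGraph W} {c : Sym2 V → Bool} :
    HasMonoCopy F H c ↔ ∃ b, H ⊑ colorSubgraph F c b := by
  simp only [HasMonoCopy, containsCopy_iff_isContained]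

theorem forall_eq_or_forall_eq_not_of_le_comap {G : SimpleGraph V} {F : SimpleGraph β}
    {ψ : Sym2 V → Bool} {c : Sym2 β → Bool} {f : V → β} {b : Bool}
    (ht : colorSubgraph G ψ true ≤ (colorSubgraph F c b).comap f)
    (hf : colorSubgraph G ψ false ≤ (colorSubgraph F c !b).comap f) :
    (∀ a a', G.Adj a a' → c s(f a, f a') = ψ s(a, a')) ∨
      (∀ a a', G.Adj a a' → c s(f a, f a') = !ψ s(a, a')) := by
  have key : ∀ a a', G.Adj a a' → c s(f a, f a') = if ψ s(a, a') then b else !b := by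
    intro a a' h
    cases hψ : ψ s(a, a')
    · exact (hf ⟨h, hψ⟩).2
    · exact (ht ⟨h, hψ⟩).2
  cases b
  · exact .inr fun a a' h => by rw [key a a' h]; cases ψ s(a, a') <;> rfl
  · exact .inl fun a a' h => by rw [key a a' h]; cases ψ s(a, a') <;> rfl

end Coloring

theorem HasWeakBELGadgets.exists_gadget {W : Type*} {H : SimpleGraph W}
    (hH : HasWeakBELGadgets H) {α : Type*} [Fintype α] {G₀ G₁ : SimpleGraph α}
    (hdisj : Disjoint G₀ G₁) (h₀ : H.Free G₀) (h₁ : H.Free G₁) :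
    ∃ (n : ℕ) (F : SimpleGraph (Fin n)) (g : α ↪ Fin n), F.comap g = G₀ ⊔ G₁ ∧
      ¬ IsRamseyFor F H ∧ ∀ c, ¬ HasMonoCopy F H c →
        ∃ b₀ b₁, G₀ ≤ (colorSubgraph F c b₀).comap g ∧ G₁ ≤ (colorSubgraph F c b₁).comap g := by
  let e := Fintype.equivFin α
  have hfree : ∀ {K : SimpleGraph α}, H.Free K → ¬ ContainsCopy (K.comap e.symm) H :=
    fun hK h => hK ((containsCopy_iff_isContained.1 h).trans (Iso.comap e.symm _).isContained)
  obtain ⟨n, F, g, hg, hadj, ⟨c₀, hc₀, -⟩, hmono⟩ := hH _ (G₀.comap e.symm) (G₁.comap e.symm)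
    (fun x y h => hdisj.le_bot h) (hfree h₀) (hfree h₁)
  have hF : ∀ a b, F.Adj (g (e a)) (g (e b)) ↔ (G₀ ⊔ G₁).Adj a b := fun a b => by
    simpa using (hadj (e a) (e b)).symm
  refine ⟨n, F, e.toEmbedding.trans ⟨g, hg⟩, ?_, fun h => hc₀ (h c₀), fun c hc => ?_⟩
  · ext a b
    exact hF a b
  obtain ⟨⟨b₀, hb₀⟩, ⟨b₁, hb₁⟩⟩ := hmono c hc
  refine ⟨b₀, b₁, fun a b h => ⟨(hF a b).2 (.inl h), ?_⟩, fun a b h => ⟨(hF a b).2 (.inr h), ?_⟩⟩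
  · exact hb₀ _ _ (by simpa using h)
  · exact hb₁ _ _ (by simpa using h)

/-- If a finite connected simple graph `H` has weak BEL gadgets, then it has BEL
gadgets. -/
theorem stmt_14 (V : Type) [Fintype V] (H : SimpleGraph V)
    (hconn : H.Connected) (hweak : HasWeakBELGadgets H) :
    HasBELGadgets H := by
  intro m G ψ hψ
  have hfree : ∀ b, H.Free (colorSubgraph G ψ b) := fun b h => hψ (hasMonoCopy_iff.2 ⟨b, h⟩)
  rcases eq_or_ne G ⊥ with rfl | hG
  · exact ⟨m, ⊥, id, fun h => hψ (h ψ), Function.injective_id, fun _ _ => Iff.rfl,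
      fun _ _ => .inl fun _ _ h => h.elim⟩
  have hV : 2 < Nat.card V := not_le.1 fun hV =>
    let ⟨p, q, hpq⟩ := ne_bot_iff_exists_adj.1 hG
    hfree _ (isContained_of_natCard_le_two H hV (ne_bot_iff_exists_adj.2 ⟨p, q, hpq, rfl⟩))
  have : Nontrivial V := Finite.one_lt_card_iff_nontrivial.1 (by omega)
  obtain ⟨u⟩ := hconn.nonempty
  obtain ⟨v, huv⟩ := hconn.preconnected.exists_adj_of_nontrivial u
  have hedge : edge u v ≤ H := (edge_le_iff H).2 (.inr huv)
  have hsup : (colorSubgraph G ψ true ⊕g (H \ edge u v)) ⊔ (colorSubgraph G ψ false ⊕g edge u v)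
      = G ⊕g H := by
    rw [sum_sup_sum, colorSubgraph_true_sup_false, sdiff_sup_cancel hedge]
  obtain ⟨n, F, g, hF, hnR, hmono⟩ := hweak.exists_gadget
    ((disjoint_colorSubgraph_true_false G ψ).sum disjoint_sdiff_self_left)
    (fun h => (hconn.isContained_sum h).elim (hfree true) (not_isContained_of_lt
      (sdiff_lt hedge (ne_bot_iff_exists_adj.2 ⟨u, v, (adj_edge u v).2 ⟨rfl, huv.ne⟩⟩))))
    (fun h => (hconn.isContained_sum h).elim (hfree false)
      (hconn.free_edge_of_two_lt_natCard hV u v))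
  refine ⟨n, F, g ∘ Sum.inl, hnR, g.injective.comp Sum.inl_injective, fun a b => ?_,
    fun c hc => ?_⟩
  · simpa using congrArg (fun K => K.Adj (.inl a) (.inl b)) (hF.trans hsup).symm
  obtain ⟨b₀, b₁, h₀, h₁⟩ := hmono c hc
  rw [sum_le_comap_iff] at h₀ h₁
  obtain rfl : b₁ = !b₀ := Bool.eq_not_iff.2 fun hb => hc <| hasMonoCopy_iff.2
    ⟨b₀, isContained_of_le_comap (g.injective.comp Sum.inr_injective)
      (sdiff_sup_cancel hedge ▸ sup_le h₀.2 (hb ▸ h₁.2))⟩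
  exact forall_eq_or_forall_eq_not_of_le_comap h₀.1 h₁.1
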